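/- arXiv:2605.26222 — 3 statements merged into one kernel-verified Lean document; each statement's English description precedes it below -/
import Mathlib

section
/- Let A ≥ 0 satisfy E[exp(λ(A − E[A]))] ≤ exp(λ²ν/2) for all λ ∈ R and E[A²] ≤ ν, E[A] ≤ √ν, and suppose C = (A − E[A])² satisfies E[exp(λ(C − E[C]))] ≤ exp(8ν²λ²/(1−2νλ)) for λ ∈ (0, 1/(2ν)). Then D = A² satisfies, for all λ ∈ (0, 1/(2ν)), E[exp(λ D)] ≤ exp((16λ²ν² + λν)/(1 − 2νλ)). -/
open MeasureTheory ProbabilityTheory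
open scoped ENNReal

/-!
Write `m = E[A]`. Pointwise, `λA² = λE[A²] + λ(C - E[C]) + 2mλ(A - m)`, so
`E[exp(λA²)] = exp(λE[A²]) · E[exp(λ(C - E[C])) · exp(2mλ(A - m))]`. Hölder's inequality with
`p = 3/(2 + 2νλ)` and `q = 3/(1 - 2νλ)` bounds the last expectation by the Bernstein bound for `C`
at `pλ`, which still lies in `(0, 1/(2ν))`, and the sub-Gaussian bound for `A` at `2mλq`. The two
factors contribute `12ν²λ²/(1 - 2νλ)` and `6m²νλ²/(1 - 2νλ)` to the exponent, and
`m² ≤ E[A²] ≤ ν` because `E[C] ≥ 0`.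
-/

lemma ENNReal.ofReal_exp_mul_rpow (s a : ℝ) :
    ENNReal.ofReal (Real.exp a) ^ s = ENNReal.ofReal (Real.exp (s * a)) := by
  rw [ENNReal.ofReal_rpow_of_pos (Real.exp_pos a), ← Real.exp_mul, mul_comm]

lemma ENNReal.rpow_one_div_le_ofReal_exp {x : ℝ≥0∞} {a p : ℝ} (hp : 0 < p)
    (hx : x ≤ ENNReal.ofReal (Real.exp a)) : x ^ (1 / p) ≤ ENNReal.ofReal (Real.exp (a / p)) :=
  calc x ^ (1 / p) ≤ ENNReal.ofReal (Real.exp a) ^ (1 / p) := by gcongr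
    _ = ENNReal.ofReal (Real.exp (a / p)) := by rw [ENNReal.ofReal_exp_mul_rpow, one_div_mul_eq_div]

/-- Hölder's inequality for exponential moments. -/
lemma lintegral_exp_add_le {Ω : Type*} [MeasurableSpace Ω] {P : Measure Ω} {X Y : Ω → ℝ}
    (hX : AEMeasurable X P) (hY : AEMeasurable Y P) {p q : ℝ} (hpq : p.HolderConjugate q)
    {s t a b : ℝ}
    (hXa : ∫⁻ ω, ENNReal.ofReal (Real.exp (p * s * X ω)) ∂P ≤ ENNReal.ofReal (Real.exp a))
    (hYb : ∫⁻ ω, ENNReal.ofReal (Real.exp (q * t * Y ω)) ∂P ≤ ENNReal.ofReal (Real.exp b)) :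
    ∫⁻ ω, ENNReal.ofReal (Real.exp (s * X ω + t * Y ω)) ∂P
      ≤ ENNReal.ofReal (Real.exp (a / p + b / q)) := by
  set f := fun ω => ENNReal.ofReal (Real.exp (s * X ω))
  set g := fun ω => ENNReal.ofReal (Real.exp (t * Y ω))
  have hf : AEMeasurable f P := (hX.const_mul s).exp.ennreal_ofReal
  have hg : AEMeasurable g P := (hY.const_mul t).exp.ennreal_ofReal
  calc ∫⁻ ω, ENNReal.ofReal (Real.exp (s * X ω + t * Y ω)) ∂P = ∫⁻ ω, (f * g) ω ∂P := by
        simp only [f, g, Pi.mul_apply, Real.exp_add, ENNReal.ofReal_mul (Real.exp_nonneg _)]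
    _ ≤ (∫⁻ ω, f ω ^ p ∂P) ^ (1 / p) * (∫⁻ ω, g ω ^ q ∂P) ^ (1 / q) :=
        ENNReal.lintegral_mul_le_Lp_mul_Lq P hpq hf hg
    _ ≤ ENNReal.ofReal (Real.exp (a / p)) * ENNReal.ofReal (Real.exp (b / q)) := by
        simp only [f, g, ENNReal.ofReal_exp_mul_rpow, ← mul_assoc]
        exact mul_le_mul' (ENNReal.rpow_one_div_le_ofReal_exp hpq.pos hXa)
          (ENNReal.rpow_one_div_le_ofReal_exp hpq.symm.pos hYb)
    _ = ENNReal.ofReal (Real.exp (a / p + b / q)) := by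
        rw [Real.exp_add, ENNReal.ofReal_mul (Real.exp_nonneg _)]

lemma Real.holderConjugate_three_div {t : ℝ} (ht0 : -1 < t) (ht : 2 * t < 1) :
    (3 / (2 + 2 * t)).HolderConjugate (3 / (1 - 2 * t)) := by
  rw [Real.holderConjugate_iff, one_lt_div (by linarith), inv_div, inv_div]
  refine ⟨by linarith, ?_⟩
  field_simp
  ring

lemma integral_sq_eq_integral_sub_sq_add {Ω : Type*} [MeasurableSpace Ω] {P : Measure Ω}
    [IsProbabilityMeasure P] {A : Ω → ℝ} (hA : AEMeasurable A P) {c : ℝ}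
    (hAc : Integrable (fun ω => (A ω - c) ^ 2) P) :
    ∫ ω, A ω ^ 2 ∂P = ∫ ω, (A ω - ∫ ω', A ω' ∂P) ^ 2 ∂P + (∫ ω, A ω ∂P) ^ 2 := by
  have hmem : MemLp A 2 P := by
    have : MemLp (fun ω => A ω - c) 2 P :=
      (memLp_two_iff_integrable_sq (hA.sub_const c).aestronglyMeasurable).mpr hAc
    convert this.add (memLp_const c) using 1
    funext ω
    simp
  rw [← variance_eq_integral hA, variance_eq_sub hmem]
  simp only [Pi.pow_apply, sub_add_cancel]

lemma bernstein_add_subgaussian_exponent_le {ν l m e : ℝ} (hν : 0 < ν) (hl : 0 < l)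
    (hνl : 2 * ν * l < 1) (hm : m ^ 2 ≤ ν) (he : e ≤ ν) :
    l * e + (8 * ν ^ 2 * (3 / (2 + 2 * (ν * l)) * l) ^ 2
        / (1 - 2 * ν * (3 / (2 + 2 * (ν * l)) * l)) / (3 / (2 + 2 * (ν * l)))
      + (3 / (1 - 2 * (ν * l)) * (2 * m * l)) ^ 2 * ν / 2 / (3 / (1 - 2 * (ν * l))))
      ≤ (16 * l ^ 2 * ν ^ 2 + l * ν) / (1 - 2 * ν * l) := by
  have h1 : 0 < 1 - 2 * ν * l := by linarith
  have hbern : 8 * ν ^ 2 * (3 / (2 + 2 * (ν * l)) * l) ^ 2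
      / (1 - 2 * ν * (3 / (2 + 2 * (ν * l)) * l)) / (3 / (2 + 2 * (ν * l)))
      = 12 * ν ^ 2 * l ^ 2 / (1 - 2 * ν * l) := by
    have h2 : 0 < 2 + 2 * (ν * l) := by positivity
    rw [show 1 - 2 * ν * (3 / (2 + 2 * (ν * l)) * l) = 2 * (1 - 2 * ν * l) / (2 + 2 * (ν * l)) by
      field_simp; ring]
    field_simp
    ring
  have hsubg : (3 / (1 - 2 * (ν * l)) * (2 * m * l)) ^ 2 * ν / 2 / (3 / (1 - 2 * (ν * l)))
      = 6 * (m ^ 2 * ν) * l ^ 2 / (1 - 2 * ν * l) := by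
    rw [← mul_assoc 2 ν l]
    field_simp
    ring
  have hmν : 6 * (m ^ 2 * ν) * l ^ 2 / (1 - 2 * ν * l) ≤ 6 * ν ^ 2 * l ^ 2 / (1 - 2 * ν * l) := by
    gcongr
    nlinarith
  have hsum : l * ν + 18 * ν ^ 2 * l ^ 2 / (1 - 2 * ν * l)
      = (16 * l ^ 2 * ν ^ 2 + l * ν) / (1 - 2 * ν * l) := by
    rw [eq_div_iff h1.ne', add_mul, div_mul_cancel₀ _ h1.ne']
    ring
  rw [hbern, hsubg, ← hsum]
  have : l * e ≤ l * ν := by gcongr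
  linarith [show 12 * ν ^ 2 * l ^ 2 / (1 - 2 * ν * l) + 6 * ν ^ 2 * l ^ 2 / (1 - 2 * ν * l)
    = 18 * ν ^ 2 * l ^ 2 / (1 - 2 * ν * l) by ring]

theorem stmt_10_general {Ω : Type*} [MeasurableSpace Ω] (P : Measure Ω) [IsProbabilityMeasure P]
    (ν : ℝ) (hν : 0 < ν) (A : Ω → ℝ) (hAmeas : Measurable A)
    (hAmgf : ∀ l : ℝ,
      ∫⁻ ω, ENNReal.ofReal (Real.exp (l * (A ω - ∫ ω', A ω' ∂P))) ∂P
        ≤ ENNReal.ofReal (Real.exp (l ^ 2 * ν / 2)))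
    (hA2 : ∫ ω, A ω ^ 2 ∂P ≤ ν)
    (C : Ω → ℝ) (hC : C = fun ω => (A ω - ∫ ω', A ω' ∂P) ^ 2)
    (hCint : Integrable C P)
    (hCmgf : ∀ l : ℝ, l ∈ Set.Ioo (0 : ℝ) (1 / (2 * ν)) →
      ∫⁻ ω, ENNReal.ofReal (Real.exp (l * (C ω - ∫ ω', C ω' ∂P))) ∂P
        ≤ ENNReal.ofReal (Real.exp (8 * ν ^ 2 * l ^ 2 / (1 - 2 * ν * l)))) :
    ∀ l : ℝ, l ∈ Set.Ioo (0 : ℝ) (1 / (2 * ν)) →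
      ∫⁻ ω, ENNReal.ofReal (Real.exp (l * A ω ^ 2)) ∂P
        ≤ ENNReal.ofReal (Real.exp ((16 * l ^ 2 * ν ^ 2 + l * ν) / (1 - 2 * ν * l))) := by
  rintro l ⟨hl0, hlν⟩
  have hνl : 2 * ν * l < 1 := by rwa [lt_div_iff₀ (by positivity), mul_comm] at hlν
  set m := ∫ ω, A ω ∂P
  set c := ∫ ω, C ω ∂P
  have hD : ∫ ω, A ω ^ 2 ∂P = c + m ^ 2 := by
    subst hC
    exact integral_sq_eq_integral_sub_sq_add hAmeas.aemeasurable hCint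
  have hm : m ^ 2 ≤ ν := by
    have : 0 ≤ c := integral_nonneg fun ω => by simp only [hC]; positivity
    linarith
  have hpl : 3 / (2 + 2 * (ν * l)) * l ∈ Set.Ioo 0 (1 / (2 * ν)) := by
    refine ⟨by positivity, ?_⟩
    rw [lt_div_iff₀ (by positivity), div_mul_eq_mul_div, div_mul_eq_mul_div,
      div_lt_one (by positivity)]
    nlinarith
  have hCm : Measurable C := hC ▸ (hAmeas.sub_const m).pow_const 2
  have hHolder := lintegral_exp_add_le (s := l) (t := 2 * m * l)
    (hCm.sub_const c).aemeasurable (hAmeas.sub_const m).aemeasurable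
    (Real.holderConjugate_three_div (neg_one_lt_zero.trans (by positivity)) (by linarith))
    (hCmgf _ hpl) (hAmgf _)
  calc ∫⁻ ω, ENNReal.ofReal (Real.exp (l * A ω ^ 2)) ∂P
      = ∫⁻ ω, ENNReal.ofReal (Real.exp (l * ∫ ω, A ω ^ 2 ∂P))
          * ENNReal.ofReal (Real.exp (l * (C ω - c) + 2 * m * l * (A ω - m))) ∂P := by
        refine lintegral_congr fun ω => ?_
        rw [← ENNReal.ofReal_mul (Real.exp_nonneg _), ← Real.exp_add, hD, hC]
        ring_nf
    _ ≤ ENNReal.ofReal (Real.exp (l * ∫ ω, A ω ^ 2 ∂P)) * ENNReal.ofReal (Real.exp _) := by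
        rw [lintegral_const_mul' _ _ ENNReal.ofReal_ne_top]
        gcongr
    _ ≤ _ := by
        rw [← ENNReal.ofReal_mul (Real.exp_nonneg _), ← Real.exp_add]
        gcongr
        exact bernstein_add_subgaussian_exponent_le hν hl0 hνl hm hA2

/-- MGF bound for `D = A²`: from a subgaussian MGF bound for `A - E[A]`, moment bounds
`E[A²] ≤ ν`, `E[A] ≤ √ν`, and a Bernstein MGF bound for `C = (A - E[A])²`, it follows that
`E[exp(λ A²)] ≤ exp((16λ²ν² + λν)/(1 - 2νλ))` for all `λ ∈ (0, 1/(2ν))`. -/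
theorem stmt_10 {Ω : Type*} [MeasurableSpace Ω] (P : Measure Ω) [IsProbabilityMeasure P]
    (ν : ℝ) (hν : 0 < ν) (A : Ω → ℝ) (hAmeas : Measurable A)
    (hA0 : ∀ ω, 0 ≤ A ω) (hAint : Integrable A P)
    (hAmgf : ∀ l : ℝ,
      ∫⁻ ω, ENNReal.ofReal (Real.exp (l * (A ω - ∫ ω', A ω' ∂P))) ∂P
        ≤ ENNReal.ofReal (Real.exp (l ^ 2 * ν / 2)))
    (hA2 : ∫ ω, A ω ^ 2 ∂P ≤ ν)
    (hA1 : ∫ ω, A ω ∂P ≤ Real.sqrt ν)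
    (C : Ω → ℝ) (hC : C = fun ω => (A ω - ∫ ω', A ω' ∂P) ^ 2)
    (hCint : Integrable C P)
    (hCmgf : ∀ l : ℝ, l ∈ Set.Ioo (0 : ℝ) (1 / (2 * ν)) →
      ∫⁻ ω, ENNReal.ofReal (Real.exp (l * (C ω - ∫ ω', C ω' ∂P))) ∂P
        ≤ ENNReal.ofReal (Real.exp (8 * ν ^ 2 * l ^ 2 / (1 - 2 * ν * l)))) :
    ∀ l : ℝ, l ∈ Set.Ioo (0 : ℝ) (1 / (2 * ν)) →
      ∫⁻ ω, ENNReal.ofReal (Real.exp (l * A ω ^ 2)) ∂P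
        ≤ ENNReal.ofReal (Real.exp ((16 * l ^ 2 * ν ^ 2 + l * ν) / (1 - 2 * ν * l))) :=
  stmt_10_general P ν hν A hAmeas hAmgf hA2 C hC hCint hCmgf
end

section
/- For ν > 0, T ≥ 1, β ∈ (0,1), and r_ν = √(1/ν + 1/4) − 1/2, the quantity τ = inf_{λ∈(0,r_ν)} (1/λ)[T·F((λ+λ²)/2) + log(1/β)] with F(x) = (16ν²x² + νx)/(1−2νx) satisfies τ ≤ T(ν + min{1,√ν})(1/2 + 3q + q²/2), where q = √((2/T)·log(1/β)). -/
/-!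
Write `u = ν (λ + λ²)`. Then `F ((λ + λ²) / 2) = -4u + 9u / (2(1 - u))` and `1 / λ = ν (1 + λ) / u`,
so the objective at `λ` equals `T ν (1 + λ) G(u)` with `G(u) = -4 + 9 / (2(1 - u)) + L / u`,
`L = log (1/β) / T = q² / 2`. The choice `u = q / (q + 3)` minimises `G`, with value
`1/2 + 3q + q²/2`, and `ν (1 + λ) ≤ ν + ν r_ν ≤ ν + min 1 √ν` because `r_ν` is the positive root of
`r + r² = 1 / ν`.
-/

open Real

noncomputable section

/-- The larger root of `x + x² = c`. -/
def posRoot (c : ℝ) : ℝ := √(c + 1 / 4) - 1 / 2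

lemma posRoot_add_sq {c : ℝ} (hc : -(1 / 4) ≤ c) : posRoot c + posRoot c ^ 2 = c := by
  have h := sq_sqrt (show 0 ≤ c + 1 / 4 by linarith)
  unfold posRoot
  linear_combination h

lemma posRoot_pos {c : ℝ} (hc : 0 < c) : 0 < posRoot c := by
  have : √(1 / 4) < √(c + 1 / 4) := sqrt_lt_sqrt (by norm_num) (by linarith)
  rw [show (1 / 4 : ℝ) = (1 / 2) ^ 2 by norm_num, sqrt_sq (by norm_num)] at this
  unfold posRoot
  linarith

lemma posRoot_lt_posRoot {c d : ℝ} (hc : -(1 / 4) ≤ c) (hcd : c < d) : posRoot c < posRoot d := by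
  have : √(c + 1 / 4) < √(d + 1 / 4) := sqrt_lt_sqrt (by linarith) (by linarith)
  unfold posRoot
  linarith

lemma mul_posRoot_div_add_sq {ν c : ℝ} (hν : 0 < ν) (hc : 0 ≤ c) :
    ν * (posRoot (c / ν) + posRoot (c / ν) ^ 2) = c := by
  rw [posRoot_add_sq (by linarith [div_nonneg hc hν.le])]
  field_simp

lemma mul_posRoot_one_div_le_min {ν : ℝ} (hν : 0 < ν) : ν * posRoot (1 / ν) ≤ min 1 √ν := by
  have hroot := mul_posRoot_div_add_sq hν zero_le_one
  set r := posRoot (1 / ν)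
  have hr : 0 < r := posRoot_pos (by positivity)
  refine le_min (by nlinarith [mul_pos hν (sq_pos_of_pos hr)]) ?_
  -- `ν r ≤ √ν` is `√ν r ≤ 1`, i.e. `ν r² ≤ 1`
  have hsq : √ν ^ 2 = ν := sq_sqrt hν.le
  have hs : 0 < √ν := sqrt_pos.mpr hν
  have hsr : √ν * r ≤ 1 := by nlinarith [mul_pos hs hr, mul_pos hν hr]
  nlinarith

def chernoffF (ν x : ℝ) : ℝ := (16 * ν ^ 2 * x ^ 2 + ν * x) / (1 - 2 * ν * x)

def chernoffObjective (ν T ℓ l : ℝ) : ℝ := 1 / l * (T * chernoffF ν ((l + l ^ 2) / 2) + ℓ)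

def rateGap (L u : ℝ) : ℝ := -4 + 9 / (2 * (1 - u)) + L / u

lemma chernoffObjective_eq_mul_rateGap {ν T ℓ l : ℝ} (hT : T ≠ 0) (h₀ : ν * (l + l ^ 2) ≠ 0)
    (h₁ : ν * (l + l ^ 2) ≠ 1) :
    chernoffObjective ν T ℓ l = T * (ν * (1 + l)) * rateGap (ℓ / T) (ν * (l + l ^ 2)) := by
  have hl : l ≠ 0 := by rintro rfl; simp at h₀
  set u := ν * (l + l ^ 2)
  have hF : chernoffF ν ((l + l ^ 2) / 2) = (4 * u ^ 2 + u / 2) / (1 - u) := by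
    unfold chernoffF; ring
  have hνl : ν * (1 + l) = u / l := by field_simp; ring
  have h₁' : 1 - u ≠ 0 := sub_ne_zero.mpr (Ne.symm h₁)
  rw [chernoffObjective, hF, hνl]
  clear_value u
  unfold rateGap
  field_simp
  ring

lemma rateGap_at_opt {q : ℝ} (hq : 0 < q) :
    rateGap (q ^ 2 / 2) (q / (q + 3)) = 1 / 2 + 3 * q + q ^ 2 / 2 := by
  have : 1 - q / (q + 3) = 3 / (q + 3) := by field_simp; ring
  unfold rateGap
  rw [this]
  field_simp
  ring

lemma chernoffObjective_nonneg {ν T ℓ l : ℝ} (hν : 0 < ν) (hT : 0 ≤ T) (hℓ : 0 ≤ ℓ) (hl : 0 < l)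
    (hu : ν * (l + l ^ 2) < 1) : 0 ≤ chernoffObjective ν T ℓ l := by
  have hden : 0 < 1 - 2 * ν * ((l + l ^ 2) / 2) := by linarith
  unfold chernoffObjective chernoffF
  positivity

lemma bddBelow_chernoffObjective_image {ν T ℓ : ℝ} (hν : 0 < ν) (hT : 0 ≤ T) (hℓ : 0 ≤ ℓ) :
    BddBelow (chernoffObjective ν T ℓ '' Set.Ioo 0 (posRoot (1 / ν))) := by
  have hroot := mul_posRoot_div_add_sq hν zero_le_one
  refine ⟨0, ?_⟩
  rintro _ ⟨a, ⟨ha0, har⟩, rfl⟩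
  have : a + a ^ 2 < posRoot (1 / ν) + posRoot (1 / ν) ^ 2 := by nlinarith
  exact chernoffObjective_nonneg hν hT hℓ ha0 (by nlinarith)

end

/-- Explicit bound on the optimized Chernoff exponent:
`τ = inf_{λ∈(0,r_ν)} (1/λ)[T·F((λ+λ²)/2) + log(1/β)]` satisfies
`τ ≤ T(ν + min{1,√ν})(1/2 + 3q + q²/2)` for `q = √((2/T) log(1/β))`. -/
theorem stmt_15 (ν T β : ℝ) (hν : 0 < ν) (hT : 1 ≤ T) (hβ : β ∈ Set.Ioo (0 : ℝ) 1)
    (F : ℝ → ℝ) (hF : F = fun x => (16 * ν ^ 2 * x ^ 2 + ν * x) / (1 - 2 * ν * x))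
    (rν : ℝ) (hr : rν = Real.sqrt (1 / ν + 1 / 4) - 1 / 2)
    (q : ℝ) (hq : q = Real.sqrt ((2 / T) * Real.log (1 / β)))
    (τ : ℝ)
    (hτ : τ = sInf ((fun l => (1 / l) * (T * F ((l + l ^ 2) / 2) + Real.log (1 / β)))
      '' Set.Ioo (0 : ℝ) rν)) :
    τ ≤ T * (ν + min 1 (Real.sqrt ν)) * (1 / 2 + 3 * q + q ^ 2 / 2) := by
  obtain rfl : rν = posRoot (1 / ν) := hr
  obtain ⟨hβ0, hβ1⟩ := hβ
  have hT0 : 0 < T := by linarith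
  set ℓ := Real.log (1 / β)
  have hℓ : 0 < ℓ := log_pos (one_lt_one_div hβ0 hβ1)
  have hq0 : 0 < q := hq ▸ sqrt_pos.mpr (by positivity)
  have hℓq : ℓ / T = q ^ 2 / 2 := by rw [hq, sq_sqrt (by positivity)]; field_simp
  -- the minimiser of `rateGap (q ^ 2 / 2)`
  set u := q / (q + 3)
  have hu0 : 0 < u := by positivity
  have hu1 : u < 1 := (div_lt_one (by linarith)).mpr (by linarith)
  set l := posRoot (u / ν)
  have hlu : ν * (l + l ^ 2) = u := mul_posRoot_div_add_sq hν hu0.le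
  have hlr : l < posRoot (1 / ν) :=
    posRoot_lt_posRoot (by linarith [div_pos hu0 hν]) (div_lt_div_of_pos_right hu1 hν)
  subst hF hτ
  calc _ ≤ chernoffObjective ν T ℓ l :=
        csInf_le (bddBelow_chernoffObjective_image hν hT0.le hℓ.le)
          ⟨l, ⟨posRoot_pos (div_pos hu0 hν), hlr⟩, rfl⟩
    _ = T * (ν * (1 + l)) * (1 / 2 + 3 * q + q ^ 2 / 2) := by
      rw [chernoffObjective_eq_mul_rateGap hT0.ne' (hlu ▸ hu0.ne') (hlu ▸ hu1.ne), hlu, hℓq,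
        rateGap_at_opt hq0]
    _ ≤ T * (ν + min 1 √ν) * (1 / 2 + 3 * q + q ^ 2 / 2) := by
      gcongr
      nlinarith [mul_posRoot_one_div_le_min hν]
end

section
/- Define R(α, β) = [3/4 + (1/2)√(log((1+α/2)/β)) + (1/4)log((1+α/2)/β)] / log(1.25/β). For α ∈ (0,3] and β ∈ (0, 1/2], R is strictly increasing in α and strictly increasing in β, and satisfies 1/4 ≤ R(α, β) ≤ 2. -/
/-!
Put `D = log (1.25/β)` and `c = log ((1 + α/2)/1.25)`, so that `R(α, β) = N(D + c)/D` with
`N(L) = 3/4 + √L/2 + L/4`. On the given ranges `D ≥ log 2.5 > 0.9` and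
`-1/4 < c ≤ log 2 < 0.7`. Monotonicity in `α` is that of `N`. Monotonicity in `β` is that
`D ↦ N(D + c)/D` decreases: it equals `(3 + c)/(4D) + 1/4 + ½ √((D + c)/D²)`, and `(D + c)/D²`
decreases once `D + 2c > 0`. The bounds follow from `D ≤ L + 3` and, by AM–GM
`√L ≤ (L + 1)/2`, from `N(L) ≤ 1 + L/2 ≤ 2D`.
-/

open Real Set

noncomputable def ratioNum (L : ℝ) : ℝ := 3 / 4 + 1 / 2 * √L + 1 / 4 * L

lemma ratioNum_strictMonoOn : StrictMonoOn ratioNum (Ici 0) := by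
  intro x hx y _ hxy
  have := Real.sqrt_lt_sqrt hx hxy
  unfold ratioNum
  linarith

lemma ratioNum_le {L : ℝ} (hL : 0 ≤ L) : ratioNum L ≤ 1 + L / 2 := by
  unfold ratioNum
  nlinarith [sq_nonneg (√L - 1), Real.sq_sqrt hL]

lemma sqrt_add_div_lt {c D₁ D₂ : ℝ} (hD₂ : 0 < D₂) (h : D₂ < D₁) (hc : -D₂ / 2 < c) :
    √(D₁ + c) / D₁ < √(D₂ + c) / D₂ := by
  have hD₁ : 0 < D₁ := hD₂.trans h
  have hsq : (D₁ + c) / D₁ ^ 2 < (D₂ + c) / D₂ ^ 2 := by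
    rw [div_lt_div_iff₀ (by positivity) (by positivity)]
    have : 0 < D₁ * D₂ + c * (D₁ + D₂) := by nlinarith
    nlinarith [mul_pos (sub_pos.mpr h) this]
  have := Real.sqrt_lt_sqrt (div_nonneg (by linarith) (by positivity)) hsq
  rwa [Real.sqrt_div' _ (by positivity), Real.sqrt_div' _ (by positivity),
    Real.sqrt_sq hD₁.le, Real.sqrt_sq hD₂.le] at this

lemma ratioNum_add_div_lt {c D₁ D₂ : ℝ} (hD₂ : 0 < D₂) (h : D₂ < D₁) (hc₃ : -3 ≤ c)
    (hc : -D₂ / 2 < c) : ratioNum (D₁ + c) / D₁ < ratioNum (D₂ + c) / D₂ := by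
  have expand : ∀ D, 0 < D →
      ratioNum (D + c) / D = (3 + c) / (4 * D) + 1 / 4 + 1 / 2 * (√(D + c) / D) := by
    intro D hD
    unfold ratioNum
    field_simp
    ring
  have hfrac : (3 + c) / (4 * D₁) ≤ (3 + c) / (4 * D₂) :=
    div_le_div_of_nonneg_left (by linarith) (by linarith) (by linarith)
  rw [expand D₁ (hD₂.trans h), expand D₂ hD₂]
  linarith [sqrt_add_div_lt hD₂ h hc]

lemma quarter_le_ratioNum_div {L D : ℝ} (hD : 0 < D) (h : D ≤ L + 3) :
    1 / 4 ≤ ratioNum L / D := by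
  rw [le_div_iff₀ hD]
  unfold ratioNum
  linarith [Real.sqrt_nonneg L]

lemma ratioNum_div_le_two {L D : ℝ} (hL : 0 ≤ L) (hD : 9 / 10 ≤ D) (h : L ≤ D + 7 / 10) :
    ratioNum L / D ≤ 2 := by
  rw [div_le_iff₀ (by linarith)]
  linarith [ratioNum_le hL]

lemma nine_tenths_lt_log_two_point_five : 9 / 10 < log 2.5 := by
  have h := Real.log_lt_log (by norm_num) (show (2 : ℝ) ^ 13 < 2.5 ^ 10 by norm_num)
  rw [Real.log_pow, Real.log_pow] at h
  push_cast at h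
  linarith [Real.log_two_gt_d9]

lemma nine_tenths_lt_log_div {β : ℝ} (hβ : β ∈ Ioc 0 (1 / 2)) : 9 / 10 < log (1.25 / β) := by
  have : (2.5 : ℝ) ≤ 1.25 / β := by
    rw [le_div_iff₀ hβ.1]
    linarith [hβ.2]
  linarith [nine_tenths_lt_log_two_point_five, Real.log_le_log (by norm_num) this]

lemma log_div_eq_add {a b β : ℝ} (ha : 0 < a) (hb : 0 < b) (hβ : 0 < β) :
    log (a / β) = log (b / β) + log (a / b) := by
  rw [Real.log_div ha.ne' hβ.ne', Real.log_div hb.ne' hβ.ne', Real.log_div ha.ne' hb.ne']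
  ring

lemma neg_quarter_lt_log_div {α : ℝ} (hα : 0 < α) : -(1 / 4) < log ((1 + α / 2) / 1.25) := by
  have hlog : log 1.25 ≤ 1 / 4 := by
    linarith [Real.log_le_sub_one_of_pos (show (0 : ℝ) < 1.25 by norm_num)]
  rw [Real.log_div (by linarith) (by norm_num)]
  linarith [Real.log_pos (show 1 < 1 + α / 2 by linarith)]

lemma log_div_lt_seven_tenths {α : ℝ} (hα : 0 < α) (hα₃ : α ≤ 3) :
    log ((1 + α / 2) / 1.25) < 7 / 10 := by
  have : (1 + α / 2) / 1.25 ≤ 2 := by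
    rw [div_le_iff₀ (by norm_num)]
    linarith
  linarith [Real.log_le_log (by positivity) this, Real.log_two_lt_d9]

lemma log_div_strictMonoOn :
    StrictMonoOn (fun α : ℝ => log ((1 + α / 2) / 1.25)) (Ioi 0) := by
  intro α₁ hα₁ α₂ _ h
  have hα₁ : (0 : ℝ) < α₁ := hα₁
  exact Real.log_lt_log (by positivity) (by gcongr)

/-- Monotonicity and bounds for
`R(α,β) = [3/4 + ½√(log((1+α/2)/β)) + ¼ log((1+α/2)/β)] / log(1.25/β)`
on `α ∈ (0,3]`, `β ∈ (0,1/2]`: strictly increasing in each argument, and `1/4 ≤ R ≤ 2`. -/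
theorem stmt_16 (R : ℝ → ℝ → ℝ)
    (hR : R = fun α β =>
      (3 / 4 + (1 / 2) * Real.sqrt (Real.log ((1 + α / 2) / β))
        + (1 / 4) * Real.log ((1 + α / 2) / β)) / Real.log (1.25 / β)) :
    (∀ β ∈ Set.Ioc (0 : ℝ) (1 / 2), ∀ α₁ ∈ Set.Ioc (0 : ℝ) 3, ∀ α₂ ∈ Set.Ioc (0 : ℝ) 3,
      α₁ < α₂ → R α₁ β < R α₂ β)
    ∧ (∀ α ∈ Set.Ioc (0 : ℝ) 3, ∀ β₁ ∈ Set.Ioc (0 : ℝ) (1 / 2), ∀ β₂ ∈ Set.Ioc (0 : ℝ) (1 / 2),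
      β₁ < β₂ → R α β₁ < R α β₂)
    ∧ (∀ α ∈ Set.Ioc (0 : ℝ) 3, ∀ β ∈ Set.Ioc (0 : ℝ) (1 / 2),
      1 / 4 ≤ R α β ∧ R α β ≤ 2) := by
  have hR_eq : ∀ α ∈ Ioc (0 : ℝ) 3, ∀ β ∈ Ioc (0 : ℝ) (1 / 2),
      R α β = ratioNum (log (1.25 / β) + log ((1 + α / 2) / 1.25)) / log (1.25 / β) := by
    intro α hα β hβ
    rw [← log_div_eq_add (by linarith [hα.1]) (by norm_num) hβ.1, hR]
    rfl
  refine ⟨?_, ?_, ?_⟩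
  · intro β hβ α₁ hα₁ α₂ hα₂ h
    rw [hR_eq α₁ hα₁ β hβ, hR_eq α₂ hα₂ β hβ]
    have hD := nine_tenths_lt_log_div hβ
    refine div_lt_div_of_pos_right (ratioNum_strictMonoOn ?_ ?_ ?_) (by linarith)
    · exact mem_Ici.mpr (by linarith [neg_quarter_lt_log_div hα₁.1])
    · exact mem_Ici.mpr (by linarith [neg_quarter_lt_log_div hα₂.1])
    · linarith [log_div_strictMonoOn hα₁.1 hα₂.1 h]
  · intro α hα β₁ hβ₁ β₂ hβ₂ h
    rw [hR_eq α hα β₁ hβ₁, hR_eq α hα β₂ hβ₂]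
    have hD₂ := nine_tenths_lt_log_div hβ₂
    have hc := neg_quarter_lt_log_div hα.1
    refine ratioNum_add_div_lt (by linarith) ?_ (by linarith) (by linarith)
    exact Real.log_lt_log (div_pos (by norm_num) hβ₂.1)
      (div_lt_div_of_pos_left (by norm_num) hβ₁.1 h)
  · intro α hα β hβ
    rw [hR_eq α hα β hβ]
    have hD := nine_tenths_lt_log_div hβ
    have hc := neg_quarter_lt_log_div hα.1
    have hc' := log_div_lt_seven_tenths hα.1 hα.2
    exact ⟨quarter_le_ratioNum_div (by linarith) (by linarith),
      ratioNum_div_le_two (by linarith) (by linarith) (by linarith)⟩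
end
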